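/- arXiv:2108.10555 — 3 statements merged into one kernel-verified Lean document; each statement's English description precedes it below -/
import Mathlib

section
/- Let P ∈ (0,1) and h(x) = P^{1/(1+x)} for x ≥ 0. Then h''(x) = P^{1/(1+x)}((ln P)²/(1+x)⁴ + 2 ln P /(1+x)³) and h''(x) ≥ −((√3 − 3)⁴ e^{√3 − 3})/(√3 (ln P)²) for all x ≥ 0. -/
open Real

private lemma sqrt3_sq : Real.sqrt 3 ^ 2 = 3 := Real.sq_sqrt (by norm_num)

private lemma sqrt3_lt_two : Real.sqrt 3 < 2 := by
  nlinarith [sqrt3_sq, Real.sqrt_nonneg 3]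

private lemma one_lt_sqrt3 : 1 < Real.sqrt 3 := by
  nlinarith [sqrt3_sq, Real.sqrt_nonneg 3]

noncomputable def gfun : ℝ → ℝ := fun u => Real.exp (-u) * (u ^ 3 * (u - 2))

lemma gfun_hasDeriv (u : ℝ) :
    HasDerivAt gfun (Real.exp (-u) * (u ^ 2 * (-u ^ 2 + 6 * u - 6))) u := by
  have h1 : HasDerivAt (fun x : ℝ => Real.exp (-x)) (Real.exp (-u) * (-1)) u :=
    (hasDerivAt_neg u).exp
  have h2 : HasDerivAt (fun x : ℝ => x ^ 3 * (x - 2))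
      ((3 * u ^ 2) * (u - 2) + u ^ 3 * 1) u := by
    have h := (hasDerivAt_pow 3 u).mul ((hasDerivAt_id u).sub_const 2)
    refine h.congr_deriv ?_
    simp
  have := h1.mul h2
  refine this.congr_deriv ?_
  ring

lemma gfun_min (u : ℝ) (hu : 0 ≤ u) : gfun (3 - Real.sqrt 3) ≤ gfun u := by
  set r := Real.sqrt 3 with hr
  have hr2 : r ^ 2 = 3 := sqrt3_sq
  have hrpos : (0:ℝ) < r := by nlinarith [one_lt_sqrt3]
  have hu0 : (0:ℝ) < 3 - r := by nlinarith [sqrt3_lt_two]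
  have hu02 : 3 - r < 2 := by nlinarith [one_lt_sqrt3]
  have hdiff : Differentiable ℝ gfun := fun x => (gfun_hasDeriv x).differentiableAt
  have hcont : ContinuousOn gfun Set.univ := hdiff.continuous.continuousOn
  rcases le_or_gt u (3 - r) with hcase | hcase
  · -- antitone on [0, 3-r]
    have hanti : AntitoneOn gfun (Set.Icc 0 (3 - r)) := by
      apply antitoneOn_of_deriv_nonpos (convex_Icc _ _)
        (hdiff.continuous.continuousOn)
      · intro x hx
        exact (hdiff x).differentiableWithinAt
      · intro x hx
        rw [interior_Icc] at hx
        rw [(gfun_hasDeriv x).deriv]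
        have h1 : 0 < 3 - x - r := by linarith [hx.2]
        have h2 : 0 < 3 - x + r := by nlinarith [hx.1]
        have h3 : 0 ≤ x ^ 2 - 6 * x + 6 := by nlinarith [mul_pos h1 h2]
        have h4 : (0:ℝ) < Real.exp (-x) := Real.exp_pos _
        nlinarith [sq_nonneg x, mul_nonneg (le_of_lt h4) (mul_nonneg (sq_nonneg x) h3)]
    exact hanti ⟨hu, hcase⟩ ⟨hu0.le, le_refl _⟩ hcase
  · rcases le_or_gt u 2 with hcase2 | hcase2
    · have hmono : MonotoneOn gfun (Set.Icc (3 - r) 2) := by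
        apply monotoneOn_of_deriv_nonneg (convex_Icc _ _)
          (hdiff.continuous.continuousOn)
        · intro x hx
          exact (hdiff x).differentiableWithinAt
        · intro x hx
          rw [interior_Icc] at hx
          rw [(gfun_hasDeriv x).deriv]
          have h1 : 0 ≤ x - (3 - r) := by linarith [hx.1]
          have h2 : 0 ≤ (3 + r) - x := by nlinarith [hx.2]
          have h3 : 0 ≤ -x ^ 2 + 6 * x - 6 := by nlinarith [mul_nonneg h1 h2]
          have h4 : (0:ℝ) < Real.exp (-x) := Real.exp_pos _
          positivity
      exact hmono ⟨le_refl _, by linarith⟩ ⟨hcase.le, hcase2⟩ hcase.le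
    · have hg2 : gfun (3 - r) ≤ 0 := by
        unfold gfun
        have h5 : (3 - r) ^ 3 * (3 - r - 2) ≤ 0 :=
          mul_nonpos_of_nonneg_of_nonpos (pow_nonneg hu0.le 3) (by linarith)
        exact mul_nonpos_of_nonneg_of_nonpos (Real.exp_pos _).le h5
      have : 0 ≤ gfun u := by
        unfold gfun
        have : 0 ≤ u - 2 := by linarith
        positivity
      linarith

lemma first_deriv (L : ℝ) (t : ℝ) (ht : -1 < t) :
    HasDerivAt (fun t => Real.exp (L / (1 + t)))
      (Real.exp (L / (1 + t)) * (-L / (1 + t) ^ 2)) t := by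
  have hne : (1 : ℝ) + t ≠ 0 := by linarith
  have hd : HasDerivAt (fun t : ℝ => L / (1 + t)) (-L / (1 + t) ^ 2) t := by
    have h := (hasDerivAt_const t L).div ((hasDerivAt_id t).const_add 1) hne
    refine h.congr_deriv ?_
    simp
  exact hd.exp

lemma second_deriv (L : ℝ) (x : ℝ) (hx : -1 < x) :
    HasDerivAt (fun t => Real.exp (L / (1 + t)) * (-L / (1 + t) ^ 2))
      (Real.exp (L / (1 + x)) * (L ^ 2 / (1 + x) ^ 4 + 2 * L / (1 + x) ^ 3)) x := by
  have hne : (1 : ℝ) + x ≠ 0 := by linarith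
  have hq : HasDerivAt (fun t : ℝ => -L / (1 + t) ^ 2) (2 * L / (1 + x) ^ 3) x := by
    have hden : HasDerivAt (fun t : ℝ => (1 + t) ^ 2) (2 * (1 + x)) x := by
      have h := ((hasDerivAt_id x).const_add 1).pow 2
      refine h.congr_deriv ?_
      simp
    have h := (hasDerivAt_const x (-L)).div hden (pow_ne_zero 2 hne)
    refine h.congr_deriv ?_
    field_simp
    ring
  have h := (first_deriv L x hx).mul hq
  refine h.congr_deriv ?_
  field_simp

lemma gfun_eq (L : ℝ) (x : ℝ) (hne : (1:ℝ) + x ≠ 0) :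
    gfun (-L / (1 + x)) =
      Real.exp (L / (1 + x)) * (L ^ 2 / (1 + x) ^ 4 + 2 * L / (1 + x) ^ 3) * L ^ 2 := by
  unfold gfun
  rw [show -(-L / (1 + x)) = L / (1 + x) by ring, mul_assoc]
  congr 1
  field_simp
  ring

lemma gfun_val : gfun (3 - Real.sqrt 3) =
    -((Real.sqrt 3 - 3) ^ 4 * Real.exp (Real.sqrt 3 - 3)) / Real.sqrt 3 := by
  have hr2 : Real.sqrt 3 ^ 2 = 3 := sqrt3_sq
  have hrpos : (0:ℝ) < Real.sqrt 3 := by nlinarith [one_lt_sqrt3]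
  unfold gfun
  rw [show -(3 - Real.sqrt 3) = Real.sqrt 3 - 3 by ring]
  rw [eq_div_iff (ne_of_gt hrpos)]
  linear_combination (-(Real.exp (Real.sqrt 3 - 3) * (3 - Real.sqrt 3) ^ 3)) * hr2

/-- For P ∈ (0,1) and h(x) = P^{1/(1+x)} = exp((ln P)/(1+x)), the second
derivative is h''(x) = P^{1/(1+x)}((ln P)²/(1+x)⁴ + 2 ln P/(1+x)³), and it is
bounded below by −((√3−3)⁴ e^{√3−3})/(√3 (ln P)²) on [0,∞). -/
theorem detection_probability_second_derivative_bound
    (P : ℝ) (hP0 : 0 < P) (hP1 : P < 1) :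
    ∀ x : ℝ, 0 ≤ x →
      (deriv (deriv (fun t => Real.exp (Real.log P / (1 + t)))) x =
        Real.exp (Real.log P / (1 + x)) *
          ((Real.log P) ^ 2 / (1 + x) ^ 4 + 2 * Real.log P / (1 + x) ^ 3)) ∧
      (deriv (deriv (fun t => Real.exp (Real.log P / (1 + t)))) x ≥
        -((Real.sqrt 3 - 3) ^ 4 * Real.exp (Real.sqrt 3 - 3)) /
          (Real.sqrt 3 * (Real.log P) ^ 2)) := by
  intro x hx
  set L := Real.log P with hLdef
  have hL : L < 0 := Real.log_neg hP0 hP1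
  have hx1 : (-1 : ℝ) < x := by linarith
  have hne : (1 : ℝ) + x ≠ 0 := by linarith
  have hspos : (0 : ℝ) < 1 + x := by linarith
  have hev : deriv (fun t => Real.exp (L / (1 + t))) =ᶠ[nhds x]
      fun t => Real.exp (L / (1 + t)) * (-L / (1 + t) ^ 2) := by
    filter_upwards [IsOpen.mem_nhds isOpen_Ioi (show x ∈ Set.Ioi (-1:ℝ) from hx1)]
      with t ht
    exact (first_deriv L t ht).deriv
  have h1 : deriv (deriv (fun t => Real.exp (L / (1 + t)))) x =
      Real.exp (L / (1 + x)) * (L ^ 2 / (1 + x) ^ 4 + 2 * L / (1 + x) ^ 3) := by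
    rw [hev.deriv_eq]
    exact (second_deriv L x hx1).deriv
  refine ⟨h1, ?_⟩
  rw [h1, ge_iff_le]
  have hrpos : (0:ℝ) < Real.sqrt 3 := by nlinarith [one_lt_sqrt3]
  have hL2 : (0:ℝ) < L ^ 2 := by nlinarith
  have hu : 0 < -L / (1 + x) := div_pos (by linarith) hspos
  have hmin := gfun_min (-L / (1 + x)) hu.le
  rw [gfun_val, gfun_eq L x hne] at hmin
  rw [show -((Real.sqrt 3 - 3) ^ 4 * Real.exp (Real.sqrt 3 - 3)) /
        (Real.sqrt 3 * L ^ 2) =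
      (-((Real.sqrt 3 - 3) ^ 4 * Real.exp (Real.sqrt 3 - 3)) / Real.sqrt 3) / L ^ 2
      from by ring]
  rw [div_le_iff₀ hL2]
  exact hmin
end

section
/- Fix ω ∈ [1/2, 1] and define f(x) = (1 − 2ω) ln(1+x) + x (ωx − (1 − 2ω))/(1+x) for x ≥ 0. Then f is convex on [0, ∞). -/
/-- For ω ∈ [1/2,1], f(x) = (1−2ω) ln(1+x) + x(ωx−(1−2ω))/(1+x) is convex on [0,∞). -/
theorem relative_entropy_convex
    (ω : ℝ) (hω0 : 1 / 2 ≤ ω) (hω1 : ω ≤ 1) :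
    ConvexOn ℝ (Set.Ici (0 : ℝ))
      (fun t => (1 - 2 * ω) * Real.log (1 + t) +
        t * (ω * t - (1 - 2 * ω)) / (1 + t)) := by
  -- affine map t ↦ 1 + t
  set A : ℝ →ᵃ[ℝ] ℝ := AffineMap.const ℝ ℝ (1 : ℝ) + AffineMap.id ℝ ℝ with hA
  have hAval : ∀ t : ℝ, A t = 1 + t := fun t => rfl
  have hsub : Set.Ici (0 : ℝ) ⊆ A ⁻¹' Set.Ioi (0 : ℝ) := by
    intro t ht
    simp only [Set.mem_preimage, hAval, Set.mem_Ioi]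
    linarith [Set.mem_Ici.mp ht]
  -- piece 1 : (2ω−1) • (−log (1+t))
  have hlog : ConvexOn ℝ (Set.Ici (0 : ℝ)) (fun t : ℝ => -Real.log (1 + t)) := by
    have := ((strictConcaveOn_log_Ioi.concaveOn.neg).comp_affineMap A).subset hsub
      (convex_Ici 0)
    simpa [Function.comp_def, hAval] using this
  have h1 : ConvexOn ℝ (Set.Ici (0 : ℝ))
      (fun t : ℝ => (2 * ω - 1) * (-Real.log (1 + t))) := by
    have := hlog.smul (c := 2 * ω - 1) (by linarith)
    simpa [smul_eq_mul] using this
  -- piece 2 : (1−ω) • (1+t)⁻¹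
  have hinv : ConvexOn ℝ (Set.Ici (0 : ℝ)) (fun t : ℝ => (1 + t)⁻¹) := by
    have hz : ConvexOn ℝ (Set.Ioi (0 : ℝ)) (fun x : ℝ => x ^ (-1 : ℤ)) :=
      (strictConvexOn_zpow (by norm_num) (by norm_num)).convexOn
    have := (hz.comp_affineMap A).subset hsub (convex_Ici 0)
    simpa [Function.comp_def, hAval, zpow_neg_one] using this
  have h2 : ConvexOn ℝ (Set.Ici (0 : ℝ))
      (fun t : ℝ => (1 - ω) * (1 + t)⁻¹) := by
    have := hinv.smul (c := 1 - ω) (by linarith)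
    simpa [smul_eq_mul] using this
  -- piece 3 : affine part ω*(1+t) − 1
  have h3 : ConvexOn ℝ (Set.Ici (0 : ℝ)) (fun t : ℝ => ω * (1 + t) - 1) := by
    have := (convexOn_id (convex_Ici (0 : ℝ))).smul (c := ω) (by linarith)
    have h' : ConvexOn ℝ (Set.Ici (0 : ℝ)) (fun t : ℝ => ω * t) := by
      simpa [smul_eq_mul] using this
    exact (h'.add_const (ω - 1)).congr (fun t _ => by simp; ring)
  -- assemble
  have hsum := (h1.add h2).add h3
  refine hsum.congr fun t ht => ?_
  have h1t : (0 : ℝ) < 1 + t := by linarith [Set.mem_Ici.mp ht]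
  simp only [Pi.add_apply]
  field_simp
  ring
end

section
/- For κ ≥ 0 and s > 0, the binary DPSK error probability E(κ, s) = (1+κ)/(2(1+κ+s)) · exp(−κs/(κ+s)) is strictly decreasing in s for each fixed κ ≥ 0. -/
open Set

lemma StrictAntiOn.mul_antitoneOn {α M₀ : Type*} [Preorder α] [Mul M₀] [Zero M₀] [PartialOrder M₀]
    [PosMulMono M₀] [MulPosStrictMono M₀] {f g : α → M₀} {s : Set α}
    (hf : StrictAntiOn f s) (hg : AntitoneOn g s)
    (hf₀ : ∀ x ∈ s, 0 ≤ f x) (hg₀ : ∀ x ∈ s, 0 < g x) :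
    StrictAntiOn (fun x => f x * g x) s := fun _ ha _ hb hab =>
  mul_lt_mul (hf ha hb hab) (hg ha hb hab.le) (hg₀ _ hb) (hf₀ _ ha)

lemma monotoneOn_mul_div_add {κ : ℝ} (hκ : 0 ≤ κ) :
    MonotoneOn (fun s => κ * s / (κ + s)) (Ioi 0) := by
  intro a ha b hb hab
  simp only [mem_Ioi] at ha hb
  -- cross-multiplied, the inequality reads `κ² a ≤ κ² b`
  rw [div_le_div_iff₀ (by positivity) (by positivity)]
  nlinarith [mul_nonneg (mul_nonneg hκ hκ) (sub_nonneg.mpr hab)]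

/-- The binary DPSK error probability
E(κ,s) = (1+κ)/(2(1+κ+s)) · exp(−κs/(κ+s)) is strictly decreasing in the
SNR s on (0,∞) for each fixed κ ≥ 0. -/
theorem dpsk_error_strictAnti_in_snr (κ : ℝ) (hκ : 0 ≤ κ) :
    StrictAntiOn
      (fun s => (1 + κ) / (2 * (1 + κ + s)) * Real.exp (-(κ * s) / (κ + s)))
      (Set.Ioi 0) := by
  have hfrac : StrictAntiOn (fun s : ℝ => (1 + κ) / (2 * (1 + κ + s))) (Ioi 0) :=
    fun a ha b hb hab => by
      simp only [mem_Ioi] at ha hb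
      exact div_lt_div_of_pos_left (by positivity) (by positivity) (by linarith)
  have hexp : AntitoneOn (fun s : ℝ => Real.exp (-(κ * s) / (κ + s))) (Ioi 0) :=
    fun a ha b hb hab => by
      simp only [neg_div, Real.exp_le_exp, neg_le_neg_iff]
      exact monotoneOn_mul_div_add hκ ha hb hab
  refine hfrac.mul_antitoneOn hexp (fun s hs => ?_) (fun s _ => Real.exp_pos _)
  have hs : (0 : ℝ) < s := hs
  positivity
end
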